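/- arXiv:1006.5688 — 2 statements merged into one kernel-verified Lean document; each statement's English description precedes it below -/
import Mathlib

section
/- For every u ∈ ℝ^n and every i ∈ {1,…,n}, the polynomial identity I_i(u) − u_i·H(u) = u_i(1 − u_i)·∂H/∂u_i(u) holds. Consequently, at every point u of the open cube (0,1)^n (where H(u) > 0), f_i(u) − u_i = u_i(1 − u_i)·∂(log H)/∂u_i(u); in particular, u ∈ (0,1)^n is a fixed point of f if and only if it is an equilibrium of the gradient system du/dt = grad(log H(u)). -/
open Matrix Finset

/-- The codeword polynomial `F_x(u) = ∏ i, ρ_i(u_i)` with `ρ_i(u_i) = u_i` if `x_i = 1`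
and `1 - u_i` if `x_i = 0`. -/
noncomputable def codePoly {n : ℕ} (x : Fin n → ZMod 2) (u : Fin n → ℝ) : ℝ :=
  ∏ i, if x i = 1 then u i else 1 - u i

/-- The linear code `C = {mG : m ∈ 𝔽₂^k}` generated by the matrix `G`. -/
def code {k n : ℕ} (G : Matrix (Fin k) (Fin n) (ZMod 2)) : Finset (Fin n → ZMod 2) :=
  Finset.image (fun m => Matrix.vecMul m G) Finset.univ

/-- `H(u) = Σ_{x ∈ C} F_x(u)`. -/
noncomputable def Hfun {k n : ℕ} (G : Matrix (Fin k) (Fin n) (ZMod 2)) (u : Fin n → ℝ) : ℝ :=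
  ∑ x ∈ code G, codePoly x u

/-- `I_i(u) = Σ_{x ∈ C, x_i = 1} F_x(u)`. -/
noncomputable def Ifun {k n : ℕ} (G : Matrix (Fin k) (Fin n) (ZMod 2)) (i : Fin n)
    (u : Fin n → ℝ) : ℝ :=
  ∑ x ∈ (code G).filter (fun x => x i = 1), codePoly x u

/-- The rational map `f_i(u) = I_i(u)/H(u)`. -/
noncomputable def fmap {k n : ℕ} (G : Matrix (Fin k) (Fin n) (ZMod 2)) (i : Fin n)
    (u : Fin n → ℝ) : ℝ :=
  Ifun G i u / Hfun G u

/-- The point `p = (1/2, …, 1/2) ∈ ℝ^n`. -/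
noncomputable def pcenter (n : ℕ) : Fin n → ℝ := fun _ => 1/2

/-- Identification of a binary word with a 0/1 point of `ℝ^n`. -/
noncomputable def embed {n : ℕ} (w : Fin n → ZMod 2) : Fin n → ℝ :=
  fun i => if w i = 1 then 1 else 0

/-! Each codeword polynomial is affine in every coordinate: `F_x(u) = ρ_i(u_i) R(u)` with `R`
independent of `u_i`, so `∂F_x/∂u_i = ±R` and `[x_i = 1] F_x - u_i F_x = u_i (1 - u_i) ∂F_x/∂u_i`.
Summing over the code gives the identity for `H`. On the open cube `H > 0` (the zero word is a
codeword), and dividing by `H` turns `∂H/∂u_i` into `∂(log H)/∂u_i`. -/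

open Function

theorem fderiv_apply_single_eq_deriv_update {𝕜 ι F : Type*} [NontriviallyNormedField 𝕜]
    [Fintype ι] [DecidableEq ι] [NormedAddCommGroup F] [NormedSpace 𝕜 F] {f : (ι → 𝕜) → F}
    {u : ι → 𝕜} (hf : DifferentiableAt 𝕜 f u) (i : ι) :
    fderiv 𝕜 f u (Pi.single i 1) = deriv (fun t => f (update u i t)) (u i) :=
  (hf.hasFDerivAt.comp_hasDerivAt_of_eq (u i) (hasDerivAt_update u i (u i))
    (update_eq_self i u).symm).deriv.symm

section codePoly

variable {n : ℕ} (x : Fin n → ZMod 2)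

theorem codePoly_eq_mul_prod_erase (u : Fin n → ℝ) (i : Fin n) :
    codePoly x u = (if x i = 1 then u i else 1 - u i) *
      ∏ l ∈ univ.erase i, if x l = 1 then u l else 1 - u l :=
  (mul_prod_erase _ _ (mem_univ i)).symm

theorem codePoly_update (u : Fin n → ℝ) (i : Fin n) (t : ℝ) :
    codePoly x (update u i t) = (if x i = 1 then t else 1 - t) *
      ∏ l ∈ univ.erase i, if x l = 1 then u l else 1 - u l := by
  rw [codePoly_eq_mul_prod_erase x _ i, update_self]
  congr 1
  refine prod_congr rfl fun l hl => ?_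
  rw [update_of_ne (ne_of_mem_erase hl)]

theorem differentiable_codePoly : Differentiable ℝ (codePoly x) := fun u => by
  have h (l : Fin n) : Differentiable ℝ fun v : Fin n → ℝ => if x l = 1 then v l else 1 - v l := by
    split_ifs <;> fun_prop
  exact (HasFDerivAt.finsetProd fun l _ => (h l u).hasFDerivAt).differentiableAt

theorem fderiv_codePoly_single (u : Fin n → ℝ) (i : Fin n) :
    fderiv ℝ (codePoly x) u (Pi.single i 1) = (if x i = 1 then 1 else -1) *
      ∏ l ∈ univ.erase i, if x l = 1 then u l else 1 - u l := by
  rw [fderiv_apply_single_eq_deriv_update (differentiable_codePoly x u),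
    funext (codePoly_update x u i)]
  split_ifs <;> simp

theorem ite_codePoly_sub_mul_codePoly (u : Fin n → ℝ) (i : Fin n) :
    (if x i = 1 then codePoly x u else 0) - u i * codePoly x u =
      u i * (1 - u i) * fderiv ℝ (codePoly x) u (Pi.single i 1) := by
  rw [fderiv_codePoly_single, codePoly_eq_mul_prod_erase x u i]
  split_ifs <;> ring

theorem codePoly_pos {u : Fin n → ℝ} (hu : ∀ i, u i ∈ Set.Ioo (0 : ℝ) 1) : 0 < codePoly x u :=
  prod_pos fun l _ => by
    obtain ⟨h0, h1⟩ := hu l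
    split_ifs <;> linarith

end codePoly

theorem sum_filter_codePoly_sub_mul_sum_codePoly {n : ℕ} (S : Finset (Fin n → ZMod 2))
    (u : Fin n → ℝ) (i : Fin n) :
    ∑ x ∈ S.filter (· i = 1), codePoly x u - u i * ∑ x ∈ S, codePoly x u =
      u i * (1 - u i) * fderiv ℝ (fun v => ∑ x ∈ S, codePoly x v) u (Pi.single i 1) := by
  rw [fderiv_fun_sum fun x _ => differentiable_codePoly x u, _root_.sum_apply,
    sum_filter, mul_sum, mul_sum, ← sum_sub_distrib]
  exact sum_congr rfl fun x _ => ite_codePoly_sub_mul_codePoly x u i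

section code

variable {k n : ℕ} (G : Matrix (Fin k) (Fin n) (ZMod 2))

theorem Ifun_sub_mul_Hfun (u : Fin n → ℝ) (i : Fin n) :
    Ifun G i u - u i * Hfun G u = u i * (1 - u i) * fderiv ℝ (Hfun G) u (Pi.single i 1) :=
  sum_filter_codePoly_sub_mul_sum_codePoly (code G) u i

theorem differentiable_Hfun : Differentiable ℝ (Hfun G) :=
  Differentiable.fun_sum fun x _ => differentiable_codePoly x

theorem zero_mem_code : 0 ∈ code G :=
  mem_image.2 ⟨0, mem_univ _, zero_vecMul G⟩

theorem Hfun_pos {u : Fin n → ℝ} (hu : ∀ i, u i ∈ Set.Ioo (0 : ℝ) 1) : 0 < Hfun G u :=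
  sum_pos (fun x _ => codePoly_pos x hu) ⟨0, zero_mem_code G⟩

theorem fmap_sub_eq_mul_fderiv_log {u : Fin n → ℝ} (hu : ∀ i, u i ∈ Set.Ioo (0 : ℝ) 1)
    (i : Fin n) :
    fmap G i u - u i =
      u i * (1 - u i) * fderiv ℝ (fun v => Real.log (Hfun G v)) u (Pi.single i 1) := by
  have hH := (Hfun_pos G hu).ne'
  calc fmap G i u - u i = (Ifun G i u - u i * Hfun G u) / Hfun G u := by
        rw [fmap]; field_simp
    _ = _ := by
        rw [Ifun_sub_mul_Hfun, fderiv.log (differentiable_Hfun G u) hH,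
          _root_.smul_apply, smul_eq_mul]
        ring

end code

theorem stmt10_general {k n : ℕ}
    (G : Matrix (Fin k) (Fin n) (ZMod 2)) :
    (∀ (u : Fin n → ℝ) (i : Fin n),
      Ifun G i u - u i * Hfun G u =
        u i * (1 - u i) * fderiv ℝ (Hfun G) u (Pi.single i 1)) ∧
    (∀ u : Fin n → ℝ, (∀ i, u i ∈ Set.Ioo (0:ℝ) 1) →
      (∀ i : Fin n, fmap G i u - u i =
        u i * (1 - u i) * fderiv ℝ (fun v => Real.log (Hfun G v)) u (Pi.single i 1)) ∧
      ((∀ i : Fin n, fmap G i u = u i) ↔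
        (∀ i : Fin n, fderiv ℝ (fun v => Real.log (Hfun G v)) u (Pi.single i 1) = 0))) := by
  refine ⟨Ifun_sub_mul_Hfun G, fun u hu => ?_⟩
  refine ⟨fmap_sub_eq_mul_fderiv_log G hu, forall_congr' fun i => ?_⟩
  obtain ⟨h0, h1⟩ := hu i
  rw [← sub_eq_zero, fmap_sub_eq_mul_fderiv_log G hu,
    mul_eq_zero_iff_left (mul_ne_zero h0.ne' (sub_ne_zero.2 h1.ne'))]

/-- The identity `I_i(u) - u_i H(u) = u_i (1-u_i) ∂H/∂u_i(u)` holds for all `u`;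
consequently on the open cube `f_i(u) - u_i = u_i(1-u_i) ∂(log H)/∂u_i(u)`, and `u` is a
fixed point of `f` iff it is an equilibrium of the gradient system
`du/dt = grad(log H(u))`. -/
theorem stmt10 {k n : ℕ} (hk : 0 < k) (hkn : k ≤ n)
    (G : Matrix (Fin k) (Fin n) (ZMod 2))
    (hrank : G.rank = k) (hcols : ∀ i : Fin n, Gᵀ i ≠ 0) :
    (∀ (u : Fin n → ℝ) (i : Fin n),
      Ifun G i u - u i * Hfun G u =
        u i * (1 - u i) * fderiv ℝ (Hfun G) u (Pi.single i 1)) ∧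
    (∀ u : Fin n → ℝ, (∀ i, u i ∈ Set.Ioo (0:ℝ) 1) →
      (∀ i : Fin n, fmap G i u - u i =
        u i * (1 - u i) * fderiv ℝ (fun v => Real.log (Hfun G v)) u (Pi.single i 1)) ∧
      ((∀ i : Fin n, fmap G i u = u i) ↔
        (∀ i : Fin n, fderiv ℝ (fun v => Real.log (Hfun G v)) u (Pi.single i 1) = 0))) :=
  stmt10_general G
end

section
/- Let l ≥ 2 and i, i_1,…,i_l ∈ {1,…,n}. The mixed partial derivative ∂^l I_i/∂u_{i_1}⋯∂u_{i_l}(p) is classified as follows: it equals 0 if some index is repeated among i_1,…,i_l (condition C0), or if the indices i_1,…,i_l are distinct and g_{i_1} + ⋯ + g_{i_l} is neither 0 nor g_i (condition C1); it equals (−1)^{l+1} · 2^{−n+k+l−1} if the indices i_1,…,i_l are distinct and g_{i_1} + ⋯ + g_{i_l} = g_i (condition C2); and it equals (−1)^l · 2^{−n+k+l−1} if the indices i_1,…,i_l are distinct and g_{i_1} + ⋯ + g_{i_l} = 0 (condition C3). -/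
open Matrix Finset

/-!
Each codeword polynomial `F_x` is a product of affine functions of distinct coordinates, so its
mixed partial derivative along distinct coordinates `i_1, …, i_l` is, up to the sign
`∏_t (±1)` read off from `x_{i_t}`, the product of the remaining `n - l` factors, which is
`2^{-(n-l)}` at `p`; along a repeated coordinate it vanishes. Writing `x = mG` and expressing
both the signs and the indicator of `x_i = 1` through the character `c ↦ (-1)^c` of `𝔽₂`, the sum
over the code becomes the two character sums `∑_m (-1)^{m·w}` and `∑_m (-1)^{m·(w + g_i)}` with
`w = g_{i_1} + ⋯ + g_{i_l}`; each is `2^k` or `0` according as its vector vanishes.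
-/

section IteratedFDeriv

variable {𝕜 : Type*} [NontriviallyNormedField 𝕜] {E F : Type*} [NormedAddCommGroup E]
  [NormedSpace 𝕜 E] [NormedAddCommGroup F] [NormedSpace 𝕜 F]

theorem iteratedFDeriv_succ_apply_snoc_of_fderiv_apply {f g : E → F} {v : E}
    (hf : ContDiff 𝕜 ⊤ f) (hg : ∀ y, fderiv 𝕜 f y v = g y) (l : ℕ) (x : E) (m : Fin l → E) :
    iteratedFDeriv 𝕜 (l + 1) f x (Fin.snoc m v) = iteratedFDeriv 𝕜 l g x m := by
  have hg' : g = ContinuousLinearMap.apply 𝕜 F v ∘ fderiv 𝕜 f := funext fun y => (hg y).symm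
  rw [iteratedFDeriv_succ_apply_right, Fin.init_snoc, Fin.snoc_last, hg',
    ContinuousLinearMap.iteratedFDeriv_comp_left _ (hf.fderiv_right le_top).contDiffAt le_top]
  rfl

end IteratedFDeriv

section AffineProd

variable {𝕜 : Type*} [NontriviallyNormedField 𝕜] {ι : Type*} [Fintype ι] (a b : ι → 𝕜)

def affineProd (S : Finset ι) (u : ι → 𝕜) : 𝕜 := ∏ j ∈ S, (a j + b j * u j)

theorem contDiff_affineProd (S : Finset ι) {m : WithTop ℕ∞} : ContDiff 𝕜 m (affineProd a b S) :=
  contDiff_prod fun j _ => contDiff_const.add (contDiff_const.mul (contDiff_apply 𝕜 𝕜 j))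

theorem fderiv_affineProd_apply_single [DecidableEq ι] (S : Finset ι) (u : ι → 𝕜) (j : ι) :
    fderiv 𝕜 (affineProd a b S) u (Pi.single j 1) =
      (if j ∈ S then b j else 0) * affineProd a b (S.erase j) u := by
  have hfactor : ∀ i, HasFDerivAt (fun u : ι → 𝕜 => a i + b i * u i)
      (b i • ContinuousLinearMap.proj i) u := fun i =>
    (((ContinuousLinearMap.proj (R := 𝕜) (φ := fun _ : ι => 𝕜) i).hasFDerivAt).const_mul
      (b i)).const_add (a i)
  change fderiv 𝕜 (fun u => ∏ j ∈ S, (a j + b j * u j)) u _ = _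
  rw [(HasFDerivAt.finsetProd fun i _ => hfactor i).fderiv]
  simp [_root_.sum_apply, _root_.smul_apply, Pi.single_apply, affineProd, mul_comm]

theorem iteratedFDeriv_affineProd_apply_single [DecidableEq ι] {l : ℕ} (idx : Fin l → ι)
    (S : Finset ι) (u : ι → 𝕜) :
    iteratedFDeriv 𝕜 l (affineProd a b S) u (fun t => Pi.single (idx t) 1) =
      if Function.Injective idx ∧ ∀ t, idx t ∈ S then
        (∏ t, b (idx t)) * affineProd a b (S \ Finset.univ.image idx) u
      else 0 := by
  induction idx using Fin.snocInduction generalizing S with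
  | elim0 => simp [Function.injective_of_subsingleton]
  | snoc idx j ih =>
    have hsmul : (fun u => (if j ∈ S then b j else 0) * affineProd a b (S.erase j) u) =
        (if j ∈ S then b j else 0) • affineProd a b (S.erase j) := rfl
    have himage : Finset.univ.image (Fin.snoc idx j : Fin (_ + 1) → ι) =
        insert j (Finset.univ.image idx) := by
      apply Finset.coe_injective
      simp [Fin.range_snoc]
    change iteratedFDeriv 𝕜 _ _ u ((fun i => Pi.single i 1) ∘ Fin.snoc idx j) = _
    rw [Fin.comp_snoc, iteratedFDeriv_succ_apply_snoc_of_fderiv_apply (contDiff_affineProd a b S)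
      (fderiv_affineProd_apply_single a b S · j), hsmul,
      iteratedFDeriv_const_smul_apply (contDiff_affineProd a b _).contDiffAt,
      _root_.smul_apply, Function.comp_def, ih, himage, Finset.sdiff_insert,
      ← Finset.erase_sdiff_comm]
    simp only [Fin.snoc_injective_iff, Fin.forall_fin_succ', Fin.prod_univ_castSucc,
      Fin.snoc_castSucc, Fin.snoc_last, Finset.mem_erase, Set.mem_range, smul_eq_mul]
    split_ifs <;> grind

end AffineProd

theorem AddChar.map_sum_eq_prod {A M ι : Type*} [AddCommMonoid A] [CommMonoid M]
    (ψ : AddChar A M) (s : Finset ι) (f : ι → A) : ψ (∑ i ∈ s, f i) = ∏ i ∈ s, ψ (f i) := by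
  induction s using Finset.cons_induction with
  | empty => simp
  | cons a s ha ih => rw [Finset.sum_cons, Finset.prod_cons, AddChar.map_add_eq_mul, ih]

theorem AddChar.sum_apply_dotProduct {R R' : Type*} [CommRing R] [Fintype R] [DecidableEq R]
    [CommRing R'] [IsDomain R'] {ψ : AddChar R R'} (hψ : ψ.IsPrimitive) {ι : Type*} [Fintype ι]
    [DecidableEq ι] (w : ι → R) :
    ∑ m : ι → R, ψ (m ⬝ᵥ w) = if w = 0 then (Fintype.card R : R') ^ Fintype.card ι else 0 := by
  simp_rw [dotProduct, AddChar.map_sum_eq_prod]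
  rw [← Fintype.prod_sum fun r c => ψ (c * w r)]
  simp_rw [AddChar.sum_mulShift _ hψ, Nat.cast_ite, Nat.cast_zero]
  rw [Finset.prod_ite_zero, Finset.prod_const, Finset.card_univ]
  simp only [Finset.mem_univ, forall_const, ← funext_iff, Pi.zero_def]

theorem ZMod.eq_zero_or_eq_one_of_two (c : ZMod 2) : c = 0 ∨ c = 1 := by
  revert c; decide

noncomputable def parityChar : AddChar (ZMod 2) ℝ :=
  AddChar.zmodChar 2 (by norm_num : (-1 : ℝ) ^ 2 = 1)

theorem parityChar_isPrimitive : parityChar.IsPrimitive :=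
  AddChar.zmodChar_primitive_of_primitive_root 2 (IsPrimitiveRoot.neg_one 0 (by norm_num))

theorem parityChar_apply (c : ZMod 2) : parityChar c = if c = 0 then 1 else -1 := by
  rw [parityChar, AddChar.zmodChar_apply]
  obtain rfl | rfl := ZMod.eq_zero_or_eq_one_of_two c <;> simp [ZMod.val_one]

theorem ite_eq_one_prod_sign {l : ℕ} (c : ZMod 2) (d : Fin l → ZMod 2) :
    (if c = 1 then ∏ t, (if d t = 1 then (1 : ℝ) else -1) else 0) =
      (-1) ^ l / 2 * (parityChar (∑ t, d t) - parityChar (∑ t, d t + c)) := by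
  have hsign : ∀ e : ZMod 2, (if e = 1 then (1 : ℝ) else -1) = -parityChar e := by
    intro e; obtain rfl | rfl := ZMod.eq_zero_or_eq_one_of_two e <;> simp [parityChar_apply]
  simp only [hsign, Finset.prod_neg, AddChar.map_add_eq_mul, AddChar.map_sum_eq_prod,
    Finset.card_univ, Fintype.card_fin]
  obtain rfl | rfl := ZMod.eq_zero_or_eq_one_of_two c <;> simp [parityChar_apply]; ring

theorem Matrix.vecMul_injective_of_rank_eq_card {K m n : Type*} [Field K] [Fintype m]
    [Fintype n] {A : Matrix m n K} (h : A.rank = Fintype.card m) :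
    Function.Injective A.vecMul := by
  rw [vecMul_injective_iff, linearIndependent_iff_card_eq_finrank_span, ← h,
    rank_eq_finrank_span_row]
  rfl

theorem sum_filter_code_prod_sign {k n l : ℕ} {G : Matrix (Fin k) (Fin n) (ZMod 2)}
    (hG : Function.Injective G.vecMul) (i : Fin n) (idx : Fin l → Fin n) :
    ∑ x ∈ (code G).filter (fun x => x i = 1), ∏ t, (if x (idx t) = 1 then (1 : ℝ) else -1) =
      (-1) ^ l * 2 ^ k / 2 * ((if ∑ t, Gᵀ (idx t) = 0 then 1 else 0) -
        (if ∑ t, Gᵀ (idx t) + Gᵀ i = 0 then 1 else 0)) := by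
  have hcoord : ∀ m j, (m ᵥ* G) j = m ⬝ᵥ Gᵀ j := fun _ _ => rfl
  rw [Finset.sum_filter, code, Finset.sum_image fun _ _ _ _ h => hG h]
  simp_rw [ite_eq_one_prod_sign, hcoord, ← dotProduct_sum, ← dotProduct_add, ← Finset.mul_sum,
    Finset.sum_sub_distrib, AddChar.sum_apply_dotProduct parityChar_isPrimitive]
  simp only [ZMod.card, Fintype.card_fin, Nat.cast_ofNat]
  split_ifs <;> ring

theorem codePoly_eq_affineProd {n : ℕ} (x : Fin n → ZMod 2) :
    codePoly x = affineProd (fun j => if x j = 1 then 0 else 1)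
      (fun j => if x j = 1 then 1 else -1) Finset.univ := by
  funext u
  refine Finset.prod_congr rfl fun j _ => ?_
  by_cases h : x j = 1 <;> simp [h, sub_eq_add_neg]

theorem affineProd_pcenter {n : ℕ} (x : Fin n → ZMod 2) (S : Finset (Fin n)) :
    affineProd (fun j => if x j = 1 then 0 else 1) (fun j => if x j = 1 then 1 else -1) S
      (pcenter n) = (1 / 2) ^ S.card := by
  rw [affineProd, ← Finset.prod_const]
  refine Finset.prod_congr rfl fun j _ => ?_
  by_cases h : x j = 1 <;> norm_num [h, pcenter]

theorem iteratedFDeriv_Ifun_pcenter {k n l : ℕ} (G : Matrix (Fin k) (Fin n) (ZMod 2)) (i : Fin n)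
    (idx : Fin l → Fin n) :
    iteratedFDeriv ℝ l (Ifun G i) (pcenter n) (fun t => Pi.single (idx t) 1) =
      if Function.Injective idx then
        (∑ x ∈ (code G).filter (fun x => x i = 1), ∏ t, (if x (idx t) = 1 then (1 : ℝ) else -1)) *
          (1 / 2) ^ (n - l)
      else 0 := by
  have hIfun : Ifun G i = fun u => ∑ x ∈ (code G).filter (fun x => x i = 1), codePoly x u := rfl
  rw [hIfun, iteratedFDeriv_sum fun x _ => by
    rw [codePoly_eq_affineProd]; exact contDiff_affineProd _ _ _]
  simp only [Finset.sum_apply, _root_.sum_apply, codePoly_eq_affineProd,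
    iteratedFDeriv_affineProd_apply_single, Finset.mem_univ, implies_true, and_true,
    affineProd_pcenter]
  split_ifs with hinj
  · rw [← Finset.compl_eq_univ_sdiff, Finset.card_compl, Finset.card_image_of_injective _ hinj,
      Finset.card_univ, Fintype.card_fin, Fintype.card_fin, Finset.sum_mul]
  · simp

theorem iteratedFDeriv_Ifun_pcenter_of_injective {k n l : ℕ} {G : Matrix (Fin k) (Fin n) (ZMod 2)}
    (hG : Function.Injective G.vecMul) (i : Fin n) {idx : Fin l → Fin n}
    (hinj : Function.Injective idx) :
    iteratedFDeriv ℝ l (Ifun G i) (pcenter n) (fun t => Pi.single (idx t) 1) =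
      (-1) ^ l * 2 ^ (-(n : ℤ) + k + l - 1) * ((if ∑ t, Gᵀ (idx t) = 0 then 1 else 0) -
        (if ∑ t, Gᵀ (idx t) + Gᵀ i = 0 then 1 else 0)) := by
  have hln : l ≤ n := by simpa using Fintype.card_le_of_injective idx hinj
  rw [iteratedFDeriv_Ifun_pcenter, if_pos hinj, sum_filter_code_prod_sign hG,
    show -(n : ℤ) + k + l - 1 = k - ((n - l : ℕ) : ℤ) - 1 by omega, zpow_sub₀ two_ne_zero,
    zpow_sub₀ two_ne_zero, zpow_natCast, zpow_natCast, zpow_one, _root_.one_div_pow]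
  ring

theorem stmt15_general {k n : ℕ}
    (G : Matrix (Fin k) (Fin n) (ZMod 2))
    (hrank : G.rank = k) (hcols : ∀ i : Fin n, Gᵀ i ≠ 0)
    (l : ℕ) (i : Fin n) (idx : Fin l → Fin n) :
    (¬ Function.Injective idx →
      iteratedFDeriv ℝ l (Ifun G i) (pcenter n) (fun t => Pi.single (idx t) (1:ℝ)) = 0) ∧
    (Function.Injective idx → (∑ t, Gᵀ (idx t)) ≠ 0 → (∑ t, Gᵀ (idx t)) ≠ Gᵀ i →
      iteratedFDeriv ℝ l (Ifun G i) (pcenter n) (fun t => Pi.single (idx t) (1:ℝ)) = 0) ∧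
    (Function.Injective idx → (∑ t, Gᵀ (idx t)) = Gᵀ i →
      iteratedFDeriv ℝ l (Ifun G i) (pcenter n) (fun t => Pi.single (idx t) (1:ℝ)) =
        (-1 : ℝ) ^ (l + 1) * (2 : ℝ) ^ (-(n : ℤ) + (k : ℤ) + (l : ℤ) - 1)) ∧
    (Function.Injective idx → (∑ t, Gᵀ (idx t)) = 0 →
      iteratedFDeriv ℝ l (Ifun G i) (pcenter n) (fun t => Pi.single (idx t) (1:ℝ)) =
        (-1 : ℝ) ^ l * (2 : ℝ) ^ (-(n : ℤ) + (k : ℤ) + (l : ℤ) - 1)) := by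
  have hG : Function.Injective G.vecMul :=
    Matrix.vecMul_injective_of_rank_eq_card (by rw [hrank, Fintype.card_fin])
  have hvalue := fun hinj => iteratedFDeriv_Ifun_pcenter_of_injective hG i (idx := idx) hinj
  have hadd_eq_zero : ∀ v w : Fin k → ZMod 2, v + w = 0 ↔ v = w := fun v w => by
    rw [add_eq_zero_iff_eq_neg, show -w = w from funext fun r => ZMod.neg_eq_self_mod_two (w r)]
  refine ⟨fun hinj => by rw [iteratedFDeriv_Ifun_pcenter, if_neg hinj], fun hinj h0 hi => ?_,
    fun hinj hi => ?_, fun hinj h0 => ?_⟩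
  · rw [hvalue hinj, if_neg h0, if_neg (mt (hadd_eq_zero _ _).1 hi)]
    ring
  · rw [hvalue hinj, if_neg (hi ▸ hcols i), if_pos ((hadd_eq_zero _ _).2 hi)]
    ring
  · rw [hvalue hinj, if_pos h0, if_neg (by rw [h0, zero_add]; exact hcols i)]
    ring

/-- Classification of the mixed partial derivatives `∂^l I_i/∂u_{i_1}⋯∂u_{i_l}(p)` (`l ≥ 2`):
`0` under condition C0 (a repeated index) or C1 (distinct indices with
`g_{i_1} + ⋯ + g_{i_l}` neither `0` nor `g_i`); `(-1)^(l+1) 2^(-n+k+l-1)` under C2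
(distinct indices with `g_{i_1} + ⋯ + g_{i_l} = g_i`); `(-1)^l 2^(-n+k+l-1)` under C3
(distinct indices with `g_{i_1} + ⋯ + g_{i_l} = 0`). -/
theorem stmt15 {k n : ℕ} (hk : 0 < k) (hkn : k ≤ n)
    (G : Matrix (Fin k) (Fin n) (ZMod 2))
    (hrank : G.rank = k) (hcols : ∀ i : Fin n, Gᵀ i ≠ 0)
    (l : ℕ) (hl : 2 ≤ l) (i : Fin n) (idx : Fin l → Fin n) :
    (¬ Function.Injective idx →
      iteratedFDeriv ℝ l (Ifun G i) (pcenter n) (fun t => Pi.single (idx t) (1:ℝ)) = 0) ∧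
    (Function.Injective idx → (∑ t, Gᵀ (idx t)) ≠ 0 → (∑ t, Gᵀ (idx t)) ≠ Gᵀ i →
      iteratedFDeriv ℝ l (Ifun G i) (pcenter n) (fun t => Pi.single (idx t) (1:ℝ)) = 0) ∧
    (Function.Injective idx → (∑ t, Gᵀ (idx t)) = Gᵀ i →
      iteratedFDeriv ℝ l (Ifun G i) (pcenter n) (fun t => Pi.single (idx t) (1:ℝ)) =
        (-1 : ℝ) ^ (l + 1) * (2 : ℝ) ^ (-(n : ℤ) + (k : ℤ) + (l : ℤ) - 1)) ∧
    (Function.Injective idx → (∑ t, Gᵀ (idx t)) = 0 →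
      iteratedFDeriv ℝ l (Ifun G i) (pcenter n) (fun t => Pi.single (idx t) (1:ℝ)) =
        (-1 : ℝ) ^ l * (2 : ℝ) ^ (-(n : ℤ) + (k : ℤ) + (l : ℤ) - 1)) :=
  stmt15_general G hrank hcols l i idx
end
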